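/- arXiv:hep-th/0607063 — 4 statements merged into one kernel-verified Lean document; each statement's English description precedes it below -/
import Mathlib

section
/- The assignments w⁰_{ir} ▷ x_j = -iδ_{rj} x_i, w⁺_r ▷ x_j = -iδ_{rj}·1, w ▷ 1 = 0 extend to a well-defined left action of the Hopf algebra W(Π,X) on the polynomial algebra U(X) making U(X) a left W(Π,X)-module algebra; in particular ([w⁰_{ir}, w⁰_{js}] + iδ_{rj}w⁰_{is} - iδ_{si}w⁰_{jr}) ▷ x_k = 0 and ([w⁰_{ir}, w⁺_s] - iδ_{si}w⁺_r) ▷ x_j = 0 for all indices. -/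
open TensorProduct UniversalEnvelopingAlgebra MvPolynomial

set_option maxHeartbeats 1000000 in
/-- The assignments `w⁰_{ir} ▷ x_j = -iδ_{rj} x_i`,
`w⁺_r ▷ x_j = -iδ_{rj}·1`, `w ▷ 1 = 0` extend to a well-defined left action of the Hopf
algebra `W(Π,X)` on the polynomial algebra `U(X)` making `U(X)` a left
`W(Π,X)`-module algebra; in particular
`([w⁰_{ir}, w⁰_{js}] + iδ_{rj}w⁰_{is} - iδ_{si}w⁰_{jr}) ▷ x_k = 0` and
`([w⁰_{ir}, w⁺_s] - iδ_{si}w⁺_r) ▷ x_j = 0` for all indices. -/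
theorem vectorFields_act_on_polynomials (n : ℕ)
    (L : Type*) [LieRing L] [LieAlgebra ℂ L]
    (w0 : Fin n → Fin n → L) (wp : Fin n → L)
    (hbasis : ∃ b : Module.Basis ((Fin n × Fin n) ⊕ Fin n) ℂ L,
      (∀ i r, b (Sum.inl (i, r)) = w0 i r) ∧ (∀ r, b (Sum.inr r) = wp r))
    (hww : ∀ i r j s, ⁅w0 i r, w0 j s⁆
      = (if r = j then -Complex.I else 0) • w0 i s
        + (if s = i then Complex.I else 0) • w0 j r)
    (hwp : ∀ i r s, ⁅w0 i r, wp s⁆ = (if s = i then Complex.I else 0) • wp r)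
    (hpp : ∀ r s, ⁅wp r, wp s⁆ = (0 : L)) :
    ∃ act : UniversalEnvelopingAlgebra ℂ L →ₗ[ℂ]
        MvPolynomial (Fin n) ℂ →ₗ[ℂ] MvPolynomial (Fin n) ℂ,
      -- `act` is a left action of `W(Π,X)` on `U(X)`
      act 1 = LinearMap.id ∧
      (∀ u v : UniversalEnvelopingAlgebra ℂ L, act (u * v) = act u ∘ₗ act v) ∧
      -- module-algebra property (generators are primitive, so they act as derivations,
      -- and they annihilate `1`)
      (∀ (x : L) (a b : MvPolynomial (Fin n) ℂ),
        act (ι ℂ x) (a * b) = act (ι ℂ x) a * b + a * act (ι ℂ x) b) ∧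
      (∀ x : L, act (ι ℂ x) 1 = 0) ∧
      -- the defining assignments
      (∀ i r j, act (ι ℂ (w0 i r)) (X j) = (if r = j then -Complex.I else 0) • X i) ∧
      (∀ r j, act (ι ℂ (wp r)) (X j) = C (if r = j then -Complex.I else 0)) ∧
      -- in particular, the commutation relations are represented on the coordinates
      (∀ i r j s k,
        act (ι ℂ (w0 i r) * ι ℂ (w0 j s) - ι ℂ (w0 j s) * ι ℂ (w0 i r)
            + (if r = j then Complex.I else 0) • ι ℂ (w0 i s)
            - (if s = i then Complex.I else 0) • ι ℂ (w0 j r)) (X k) = 0) ∧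
      (∀ i r s j,
        act (ι ℂ (w0 i r) * ι ℂ (wp s) - ι ℂ (wp s) * ι ℂ (w0 i r)
            - (if s = i then Complex.I else 0) • ι ℂ (wp r)) (X j) = 0) := by
  classical
  obtain ⟨b, hb0, hbp⟩ := hbasis
  -- the derivations corresponding to the basis elements
  let δ : (Fin n × Fin n) ⊕ Fin n → Derivation ℂ (MvPolynomial (Fin n) ℂ) (MvPolynomial (Fin n) ℂ) := fun z =>
    match z with
    | .inl (i, r) => MvPolynomial.mkDerivation ℂ
        (fun j => (if r = j then -Complex.I else 0) • (X i : MvPolynomial (Fin n) ℂ))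
    | .inr r => MvPolynomial.mkDerivation ℂ
        (fun j => (C (if r = j then -Complex.I else 0) : MvPolynomial (Fin n) ℂ))
  let d : L →ₗ[ℂ] Derivation ℂ (MvPolynomial (Fin n) ℂ) (MvPolynomial (Fin n) ℂ) := b.constr ℂ δ
  have hd0 : ∀ i r, d (w0 i r) = δ (Sum.inl (i, r)) := by
    intro i r; rw [← hb0 i r]; exact b.constr_basis ℂ δ _
  have hdp : ∀ r, d (wp r) = δ (Sum.inr r) := by
    intro r; rw [← hbp r]; exact b.constr_basis ℂ δ _
  have hd0X : ∀ i r j, d (w0 i r) (X j) = (if r = j then -Complex.I else 0) • (X i : MvPolynomial (Fin n) ℂ) := by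
    intro i r j; rw [hd0]; exact MvPolynomial.mkDerivation_X ℂ _ j
  have hdpX : ∀ r j, d (wp r) (X j) = (C (if r = j then -Complex.I else 0) : MvPolynomial (Fin n) ℂ) := by
    intro r j; rw [hdp]; exact MvPolynomial.mkDerivation_X ℂ _ j
  have hdC : ∀ (x : L) (c : ℂ), d x ((C c : MvPolynomial (Fin n) ℂ)) = 0 := by
    intro x c
    rw [← MvPolynomial.algebraMap_eq]
    exact Derivation.map_algebraMap (d x) c
  -- `d` is a morphism of Lie algebras
  have key : ∀ x y : L, d ⁅x, y⁆ = ⁅d x, d y⁆ := by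
    have hcase : ∀ z w, d ⁅b z, b w⁆ = ⁅d (b z), d (b w)⁆ := by
      rintro (⟨i, r⟩ | r) (⟨j, s⟩ | s)
      · rw [hb0, hb0, hww]
        apply MvPolynomial.derivation_ext
        intro k
        simp only [map_add, map_smul, Derivation.add_apply, Derivation.smul_apply,
          Derivation.commutator_apply, hd0X, map_smul]
        split_ifs <;> simp_all [smul_smul] <;> ring_nf <;>
          simp [Complex.I_sq, mul_comm]
      · rw [hb0, hbp, hwp]
        apply MvPolynomial.derivation_ext
        intro k
        simp only [map_smul, Derivation.smul_apply, Derivation.commutator_apply, hd0X, hdpX,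
          map_smul]
        split_ifs <;> simp_all [smul_smul, Algebra.smul_def, map_mul] <;> ring_nf <;>
          simp [Complex.I_sq, mul_comm]
      · rw [hbp, hb0]
        have : ⁅wp r, w0 j s⁆ = -⁅w0 j s, wp r⁆ := by rw [← lie_skew]
        rw [this, hwp]
        apply MvPolynomial.derivation_ext
        intro k
        simp only [map_neg, map_smul, Derivation.neg_apply, Derivation.smul_apply,
          Derivation.commutator_apply, hd0X, hdpX, map_smul]
        split_ifs <;> simp_all [smul_smul, Algebra.smul_def, map_mul] <;> ring_nf <;>
          simp [Complex.I_sq, mul_comm]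
      · rw [hbp, hbp, hpp]
        apply MvPolynomial.derivation_ext
        intro k
        simp only [map_zero, Derivation.zero_apply, Derivation.commutator_apply, hdpX, map_smul]
        simp [Derivation.map_algebraMap]
    intro x y
    have hx : x ∈ Submodule.span ℂ (Set.range ⇑b) := by rw [b.span_eq]; trivial
    have hy : y ∈ Submodule.span ℂ (Set.range ⇑b) := by rw [b.span_eq]; trivial
    induction hx, hy using Submodule.span_induction₂ with
    | mem_mem x y hx hy =>
        obtain ⟨z, rfl⟩ := hx; obtain ⟨w, rfl⟩ := hy; exact hcase z w
    | zero_left y hy =>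
        rw [zero_lie, map_zero]
        ext p; simp [Derivation.commutator_apply]
    | zero_right x hx =>
        rw [lie_zero, map_zero]
        ext p; simp [Derivation.commutator_apply]
    | add_left x y z hx hy hz h1 h2 =>
        rw [add_lie, map_add, h1, h2]
        ext p; simp [Derivation.commutator_apply]; ring
    | add_right x y z hx hy hz h1 h2 =>
        rw [lie_add, map_add, h1, h2]
        ext p; simp [Derivation.commutator_apply]; ring
    | smul_left c x y hx hy h =>
        rw [smul_lie, map_smul, h]
        ext p; simp [Derivation.commutator_apply, smul_sub]
    | smul_right c x y hx hy h =>
        rw [lie_smul, map_smul, h]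
        ext p; simp [Derivation.commutator_apply, smul_sub]
  -- the Lie algebra morphism into the endomorphisms
  letI : LieRing (Module.End ℂ (MvPolynomial (Fin n) ℂ)) := LieRing.ofAssociativeRing
  let ρ : L →ₗ⁅ℂ⁆ Module.End ℂ (MvPolynomial (Fin n) ℂ) :=
    { toFun := fun x => (d x).toLinearMap
      map_add' := fun x y => by ext p; simp
      map_smul' := fun c x => by ext p; simp
      map_lie' := by
        intro x y
        ext p
        simp [key, Derivation.commutator_apply, Ring.lie_def, LinearMap.sub_apply,
          Module.End.mul_apply] }
  have hρ : ∀ x : L, ρ x = (d x).toLinearMap := fun _ => rfl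
  let A := UniversalEnvelopingAlgebra.lift ℂ ρ
  have hA : ∀ x : L, A (ι ℂ x) = (d x).toLinearMap := by
    intro x; rw [UniversalEnvelopingAlgebra.lift_ι_apply]; rfl
  refine ⟨A.toLinearMap, ?_, ?_, ?_, ?_, ?_, ?_, ?_, ?_⟩
  · show A 1 = LinearMap.id
    rw [map_one]; rfl
  · intro u v
    show A (u * v) = A u ∘ₗ A v
    rw [map_mul]; rfl
  · intro x a c
    simp only [AlgHom.toLinearMap_apply, hA, Derivation.coeFn_coe]
    rw [(d x).leibniz a c, smul_eq_mul, smul_eq_mul]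
    ring
  · intro x
    simp only [AlgHom.toLinearMap_apply, hA, Derivation.coeFn_coe]
    exact (d x).map_one_eq_zero
  · intro i r j
    simp only [AlgHom.toLinearMap_apply, hA, Derivation.coeFn_coe]
    exact hd0X i r j
  · intro r j
    simp only [AlgHom.toLinearMap_apply, hA, Derivation.coeFn_coe]
    exact hdpX r j
  · intro i r j s k
    simp only [AlgHom.toLinearMap_apply, map_sub, map_add, map_smul, map_mul, hA,
      LinearMap.sub_apply, LinearMap.add_apply, LinearMap.smul_apply, Module.End.mul_apply,
      Derivation.coeFn_coe, hd0X, map_smul]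
    split_ifs <;> simp_all [smul_smul] <;> ring_nf <;> simp [Complex.I_sq, mul_comm]
  · intro i r s j
    simp only [AlgHom.toLinearMap_apply, map_sub, map_smul, map_mul, hA,
      LinearMap.sub_apply, LinearMap.smul_apply, Module.End.mul_apply,
      Derivation.coeFn_coe, hd0X, hdpX, map_smul, hdC]
    split_ifs <;> simp_all [smul_smul, Algebra.smul_def, map_mul] <;> ring_nf <;>
      simp [Complex.I_sq, mul_comm]
end

section
/- If H acts on an algebra A as a left module algebra and F ∈ H⊗H is a twist, then the star product a *_F b := μ((F^{-1(1)} ▷ a) ⊗ (F^{-1(2)} ▷ b)) is associative on A. -/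
/-!
Write `Φ ▷ (a ⊗ b ⊗ c)` for the action of `Φ ∈ H ⊗ H ⊗ H` on `A ⊗ A ⊗ A` followed by
multiplication. Since `A` is a module algebra, `(a ⋆ b) ⋆ c = ((Δ ⊗ id)F⁻¹ · (F⁻¹ ⊗ 1)) ▷ (a ⊗ b ⊗ c)`
and `a ⋆ (b ⋆ c) = ((id ⊗ Δ)F⁻¹ · (1 ⊗ F⁻¹)) ▷ (a ⊗ b ⊗ c)`, and these two elements of
`H ⊗ H ⊗ H` are the inverses of the two sides of the cocycle identity of `F`.
-/

open TensorProduct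

noncomputable def mulAct {K H A : Type*} [CommRing K] [AddCommGroup H] [Module K H]
    [Ring A] [Algebra K A] (act : H →ₗ[K] A →ₗ[K] A) :
    H ⊗[K] H →ₗ[K] A ⊗[K] A →ₗ[K] A :=
  TensorProduct.lift
    { toFun := fun h₁ =>
        { toFun := fun h₂ => LinearMap.mul' K A ∘ₗ TensorProduct.map (act h₁) (act h₂)
          map_add' := by
            intro h₂ h₂'
            simp [map_add, TensorProduct.map_add_right, LinearMap.comp_add]
          map_smul' := by
            intro c h₂
            simp [map_smul, TensorProduct.map_smul_right, LinearMap.comp_smul] }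
      map_add' := by
        intro h₁ h₁'
        ext h₂
        simp [map_add, TensorProduct.map_add_left, LinearMap.comp_add]
      map_smul' := by
        intro c h₁
        ext h₂
        simp [map_smul, TensorProduct.map_smul_left, LinearMap.comp_smul] }

section mulActOf

variable {K X Y M N P A : Type*} [CommSemiring K]
  [AddCommMonoid X] [Module K X] [AddCommMonoid Y] [Module K Y] [AddCommMonoid P] [Module K P]
  [AddCommMonoid M] [Module K M] [AddCommMonoid N] [Module K N] [Semiring A] [Algebra K A]

noncomputable def mulActOf (α : X →ₗ[K] M →ₗ[K] A) (β : Y →ₗ[K] N →ₗ[K] A) :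
    X ⊗[K] Y →ₗ[K] M ⊗[K] N →ₗ[K] A :=
  TensorProduct.lift <| ((TensorProduct.mapBilinear (RingHom.id K) M N A A).compl₁₂ α β).compr₂
    (LinearMap.llcomp K (M ⊗[K] N) (A ⊗[K] A) A (LinearMap.mul' K A))

@[simp]
theorem mulActOf_tmul (α : X →ₗ[K] M →ₗ[K] A) (β : Y →ₗ[K] N →ₗ[K] A) (x : X) (y : Y)
    (m : M) (n : N) : mulActOf α β (x ⊗ₜ y) (m ⊗ₜ n) = α x m * β y n := by
  simp [mulActOf]

theorem mulActOf_assoc_symm (α : X →ₗ[K] M →ₗ[K] A) (β : Y →ₗ[K] N →ₗ[K] A)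
    (γ : P →ₗ[K] A →ₗ[K] A) (T : X ⊗[K] (Y ⊗[K] P)) (m : M) (n : N) (c : A) :
    mulActOf (mulActOf α β) γ ((TensorProduct.assoc K X Y P).symm T) ((m ⊗ₜ n) ⊗ₜ c)
      = mulActOf α (mulActOf β γ) T (m ⊗ₜ (n ⊗ₜ c)) := by
  induction T using TensorProduct.induction_on with
  | zero => simp
  | add T T' hT hT' => simp only [map_add, LinearMap.add_apply, hT, hT']
  | tmul x W =>
    induction W using TensorProduct.induction_on with
    | zero => simp
    | add W W' hW hW' => simp only [tmul_add, map_add, LinearMap.add_apply, hW, hW']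
    | tmul y p => simp [mul_assoc]

end mulActOf

section ModuleAlgebra

variable {K H A : Type*} [CommRing K] [Ring A] [Algebra K A]

@[simp]
theorem mulAct_tmul [AddCommGroup H] [Module K H] (act : H →ₗ[K] A →ₗ[K] A) (g h : H) (a b : A) :
    mulAct act (g ⊗ₜ h) (a ⊗ₜ b) = act g a * act h b := by
  simp [mulAct]

theorem mulActOf_self [AddCommGroup H] [Module K H] (act : H →ₗ[K] A →ₗ[K] A) :
    mulActOf act act = mulAct act :=
  TensorProduct.ext' fun _ _ => TensorProduct.ext' fun _ _ => by simp

theorem mulAct_mul_tmul [Ring H] [Algebra K H] (act : H →ₗ[K] A →ₗ[K] A)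
    (hmul : ∀ g k : H, act (g * k) = act g ∘ₗ act k) (Z : H ⊗[K] H) (g h : H) (a b : A) :
    mulAct act (Z * (g ⊗ₜ h)) (a ⊗ₜ b) = mulAct act Z (act g a ⊗ₜ act h b) := by
  induction Z using TensorProduct.induction_on with
  | zero => simp
  | tmul g' h' => simp [hmul]
  | add Z Z' hZ hZ' => simp only [add_mul, map_add, LinearMap.add_apply, hZ, hZ']

variable [Ring H] [Bialgebra K H] (act : H →ₗ[K] A →ₗ[K] A)

theorem mulAct_mulAct_left (hmul : ∀ g k : H, act (g * k) = act g ∘ₗ act k)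
    (hmodalg : ∀ (g : H) (a b : A), act g (a * b) = mulAct act (Coalgebra.comul g) (a ⊗ₜ[K] b))
    (G G' : H ⊗[K] H) (a b c : A) :
    mulAct act G (mulAct act G' (a ⊗ₜ b) ⊗ₜ c)
      = mulActOf (mulAct act) act (TensorProduct.map Coalgebra.comul LinearMap.id G
          * (G' ⊗ₜ (1 : H))) ((a ⊗ₜ b) ⊗ₜ c) := by
  induction G using TensorProduct.induction_on with
  | zero => simp
  | add G₁ G₂ h₁ h₂ => simp only [map_add, add_mul, LinearMap.add_apply, h₁, h₂]
  | tmul g h =>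
    induction G' using TensorProduct.induction_on with
    | zero => simp
    | add G₁ G₂ h₁ h₂ => simp only [map_add, add_tmul, mul_add, LinearMap.add_apply, h₁, h₂]
    | tmul g' h' => simp [hmodalg, mulAct_mul_tmul act hmul]

theorem mulAct_mulAct_right (hmul : ∀ g k : H, act (g * k) = act g ∘ₗ act k)
    (hmodalg : ∀ (g : H) (a b : A), act g (a * b) = mulAct act (Coalgebra.comul g) (a ⊗ₜ[K] b))
    (G G' : H ⊗[K] H) (a b c : A) :
    mulAct act G (a ⊗ₜ mulAct act G' (b ⊗ₜ c))
      = mulActOf act (mulAct act) (TensorProduct.map LinearMap.id Coalgebra.comul G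
          * ((1 : H) ⊗ₜ G')) (a ⊗ₜ (b ⊗ₜ c)) := by
  induction G using TensorProduct.induction_on with
  | zero => simp
  | add G₁ G₂ h₁ h₂ => simp only [map_add, add_mul, LinearMap.add_apply, h₁, h₂]
  | tmul g h =>
    induction G' using TensorProduct.induction_on with
    | zero => simp
    | add G₁ G₂ h₁ h₂ => simp only [map_add, tmul_add, mul_add, LinearMap.add_apply, h₁, h₂]
    | tmul g' h' => simp [hmodalg, mulAct_mul_tmul act hmul]

end ModuleAlgebra

section Twist

variable {K H : Type*} [CommRing K] [Ring H] [Bialgebra K H]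

theorem twist_inv_cocycle (F Finv : H ⊗[K] H)
    (hinv₁ : F * Finv = 1) (hinv₂ : Finv * F = 1)
    (hcocycle :
      (F ⊗ₜ[K] (1 : H)) * (TensorProduct.map Coalgebra.comul LinearMap.id F)
        = (TensorProduct.assoc K H H H).symm ((1 : H) ⊗ₜ[K] F)
          * (TensorProduct.assoc K H H H).symm
              ((TensorProduct.map LinearMap.id Coalgebra.comul) F)) :
    TensorProduct.map Coalgebra.comul LinearMap.id Finv * (Finv ⊗ₜ[K] (1 : H))
      = (TensorProduct.assoc K H H H).symm
          (TensorProduct.map LinearMap.id Coalgebra.comul Finv * ((1 : H) ⊗ₜ[K] Finv)) := by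
  -- Viewing the cocycle identity as one between units, it can be inverted.
  let u : (H ⊗[K] H)ˣ := ⟨F, Finv, hinv₁, hinv₂⟩
  let Δ₁₂ : H ⊗[K] H →* (H ⊗[K] H) ⊗[K] H :=
    Algebra.TensorProduct.map (Bialgebra.comulAlgHom K H) (AlgHom.id K H)
  let Δ₂₃ : H ⊗[K] H →* H ⊗[K] (H ⊗[K] H) :=
    Algebra.TensorProduct.map (AlgHom.id K H) (Bialgebra.comulAlgHom K H)
  let ι₁₂ : H ⊗[K] H →* (H ⊗[K] H) ⊗[K] H :=
    (Algebra.TensorProduct.includeLeft : H ⊗[K] H →ₐ[K] (H ⊗[K] H) ⊗[K] H)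
  let ι₂₃ : H ⊗[K] H →* H ⊗[K] (H ⊗[K] H) :=
    (Algebra.TensorProduct.includeRight : H ⊗[K] H →ₐ[K] H ⊗[K] (H ⊗[K] H))
  let σ : H ⊗[K] (H ⊗[K] H) →* (H ⊗[K] H) ⊗[K] H :=
    (Algebra.TensorProduct.assoc K K K H H H).symm
  have hΔ₁₂ : ∀ X, Δ₁₂ X = TensorProduct.map Coalgebra.comul LinearMap.id X := fun _ => rfl
  have hΔ₂₃ : ∀ X, Δ₂₃ X = TensorProduct.map LinearMap.id Coalgebra.comul X := fun _ => rfl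
  have hσ : ∀ X, σ X = (TensorProduct.assoc K H H H).symm X := fun _ => rfl
  have hu : Units.map ι₁₂ u * Units.map Δ₁₂ u
      = Units.map σ (Units.map ι₂₃ u * Units.map Δ₂₃ u) := by
    ext
    simpa [u, hΔ₁₂, hΔ₂₃, hσ, ι₁₂, ι₂₃] using hcocycle
  have := congrArg (fun w => ((w⁻¹ : _ˣ) : (H ⊗[K] H) ⊗[K] H)) hu
  rw [← hσ, map_mul]
  simpa [u, hΔ₁₂, hΔ₂₃, hσ, ι₁₂, ι₂₃, mul_inv_rev, ← map_inv] using this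

end Twist

theorem star_product_associative_general (K H A : Type*) [Field K]
    [Ring H] [HopfAlgebra K H] [Ring A] [Algebra K A]
    (act : H →ₗ[K] A →ₗ[K] A)
    -- `act` is a left action making `A` a left `H`-module algebra
    (hmul : ∀ g k : H, act (g * k) = act g ∘ₗ act k)
    (hmodalg : ∀ (g : H) (a b : A),
      act g (a * b) = mulAct act (Coalgebra.comul g) (a ⊗ₜ[K] b))
    -- `F` is a twist with inverse `Finv`
    (F Finv : H ⊗[K] H)
    (hinv₁ : F * Finv = 1) (hinv₂ : Finv * F = 1)
    (hcocycle :
      (F ⊗ₜ[K] (1 : H)) * (TensorProduct.map Coalgebra.comul LinearMap.id F)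
        = (TensorProduct.assoc K H H H).symm ((1 : H) ⊗ₜ[K] F)
          * (TensorProduct.assoc K H H H).symm
              ((TensorProduct.map LinearMap.id Coalgebra.comul) F))
    -- the star product `a *_F b = μ((F⁻¹⁽¹⁾ ▷ a) ⊗ (F⁻¹⁽²⁾ ▷ b))`
    (star : A → A → A)
    (hstar : ∀ a b : A, star a b = mulAct act Finv (a ⊗ₜ[K] b)) :
    ∀ a b c : A, star (star a b) c = star a (star b c) := by
  intro a b c
  simp only [hstar]
  rw [mulAct_mulAct_left act hmul hmodalg, mulAct_mulAct_right act hmul hmodalg,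
    twist_inv_cocycle F Finv hinv₁ hinv₂ hcocycle, ← mulActOf_self, mulActOf_assoc_symm]

/-- If `H` acts on an algebra `A` as a left module algebra and `F ∈ H⊗H`
is a twist, then the star product `a *_F b := μ((F⁻¹⁽¹⁾ ▷ a) ⊗ (F⁻¹⁽²⁾ ▷ b))` is
associative on `A`. -/
theorem star_product_associative (K H A : Type*) [Field K]
    [Ring H] [HopfAlgebra K H] [Ring A] [Algebra K A]
    (act : H →ₗ[K] A →ₗ[K] A)
    -- `act` is a left action making `A` a left `H`-module algebra
    (hone : act 1 = LinearMap.id)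
    (hmul : ∀ g k : H, act (g * k) = act g ∘ₗ act k)
    (hmodalg : ∀ (g : H) (a b : A),
      act g (a * b) = mulAct act (Coalgebra.comul g) (a ⊗ₜ[K] b))
    (hunit : ∀ g : H, act g 1 = Coalgebra.counit (R := K) g • (1 : A))
    -- `F` is a twist with inverse `Finv`
    (F Finv : H ⊗[K] H)
    (hinv₁ : F * Finv = 1) (hinv₂ : Finv * F = 1)
    (hcocycle :
      (F ⊗ₜ[K] (1 : H)) * (TensorProduct.map Coalgebra.comul LinearMap.id F)
        = (TensorProduct.assoc K H H H).symm ((1 : H) ⊗ₜ[K] F)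
          * (TensorProduct.assoc K H H H).symm
              ((TensorProduct.map LinearMap.id Coalgebra.comul) F))
    (hcounit₁ : (TensorProduct.lid K H)
      ((TensorProduct.map Coalgebra.counit LinearMap.id) F) = 1)
    (hcounit₂ : (TensorProduct.rid K H)
      ((TensorProduct.map LinearMap.id Coalgebra.counit) F) = 1)
    -- the star product `a *_F b = μ((F⁻¹⁽¹⁾ ▷ a) ⊗ (F⁻¹⁽²⁾ ▷ b))`
    (star : A → A → A)
    (hstar : ∀ a b : A, star a b = mulAct act Finv (a ⊗ₜ[K] b)) :
    ∀ a b c : A, star (star a b) c = star a (star b c) :=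
  star_product_associative_general K H A act hmul hmodalg F Finv hinv₁ hinv₂ hcocycle star hstar
end

section
/- For the θ-twist F_θ = exp((i/2) θ_{rs} w⁺_r ⊗ w⁺_s) with θ antisymmetric real, the twisted coproduct of w⁰_{ir} is Δ_F(w⁰_{ir}) = w⁰_{ir}⊗1 + 1⊗w⁰_{ir} - (1/2) θ_{is}(w⁺_s ⊗ w⁺_r - w⁺_r ⊗ w⁺_s), while Δ_F(w⁺_r) = w⁺_r⊗1 + 1⊗w⁺_r remains undeformed. -/
open NormedSpace
open Nat

private lemma fact_scalar (m : ℕ) :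
    (((m + 1)! : ℂ))⁻¹ * ((m + 1 : ℕ) : ℂ) = ((m ! : ℂ))⁻¹ := by
  have h1 : ((m + 1 : ℕ) : ℂ) ≠ 0 := Nat.cast_ne_zero.mpr (Nat.succ_ne_zero m)
  have h2 : ((m ! : ℂ)) ≠ 0 := Nat.cast_ne_zero.mpr m.factorial_ne_zero
  have h3 : ((m : ℂ) + 1) * ((m ! : ℂ)) ≠ 0 := mul_ne_zero (by exact_mod_cast h1) h2
  rw [Nat.factorial_succ]
  push_cast
  field_simp

/-- `e^A D e^{-A} = D + [A,D]` when `[A,D]` commutes with `A`. -/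
private lemma conj_exp_aux {B : Type*} [NormedRing B] [NormedAlgebra ℂ B] [CompleteSpace B]
    (A D C : B) (h1 : A * D - D * A = C) (h2 : A * C = C * A) :
    exp A * D * exp (-A) = D + C := by
  have hAD : A * D = D * A + C := by rw [← h1]; abel
  have hpow : ∀ n : ℕ, A ^ n * D = D * A ^ n + (n : ℂ) • (C * A ^ (n - 1)) := by
    intro n
    induction n with
    | zero => simp
    | succ m ih =>
      have h3 : A ^ (m + 1) * D = A * (A ^ m * D) := by rw [_root_.pow_succ', mul_assoc]
      rw [h3, ih, mul_add, ← mul_assoc, hAD, add_mul, mul_smul_comm]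
      cases m with
      | zero => simp [mul_assoc, ← _root_.pow_succ']
      | succ k =>
        simp only [Nat.add_sub_cancel]
        have h4 : A * (C * A ^ k) = C * A ^ (k + 1) := by
          rw [← mul_assoc, h2, mul_assoc, ← _root_.pow_succ']
        rw [h4, mul_assoc, ← _root_.pow_succ']
        have h5 : ((k + 1 + 1 : ℕ) : ℂ) = ((k + 1 : ℕ) : ℂ) + 1 := by push_cast; ring
        rw [h5, add_smul, one_smul]
        abel
  have hs : Summable fun n : ℕ => ((n ! : ℂ))⁻¹ • A ^ n := expSeries_summable' (𝕂 := ℂ) A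
  have hsD : Summable fun n : ℕ => D * (((n ! : ℂ))⁻¹ • A ^ n) := hs.mul_left D
  have hsC : Summable fun n : ℕ => C * (((n ! : ℂ))⁻¹ • A ^ n) := hs.mul_left C
  set g : ℕ → B := fun n => ((n ! : ℂ))⁻¹ • ((n : ℂ) • (C * A ^ (n - 1))) with hg
  have hg0 : g 0 = 0 := by simp [hg]
  have hg_succ : ∀ m : ℕ, g (m + 1) = C * (((m ! : ℂ))⁻¹ • A ^ m) := by
    intro m
    simp only [hg, Nat.add_sub_cancel, smul_smul]
    rw [fact_scalar m, mul_smul_comm]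
  have hgshift : (fun m => g (m + 1)) = fun m => C * (((m ! : ℂ))⁻¹ • A ^ m) :=
    funext hg_succ
  have hgsum : Summable g := (summable_nat_add_iff 1).mp (by rw [hgshift]; exact hsC)
  have key : exp A * D = (D + C) * exp A := by
    rw [exp_eq_tsum ℂ]
    calc (∑' n : ℕ, (n !⁻¹ : ℂ) • A ^ n) * D
        = ∑' n : ℕ, ((n !⁻¹ : ℂ) • A ^ n) * D := (hs.tsum_mul_right D).symm
      _ = ∑' n : ℕ, (D * ((n !⁻¹ : ℂ) • A ^ n) + g n) := by
          refine tsum_congr fun n => ?_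
          rw [smul_mul_assoc, hpow n, smul_add, mul_smul_comm]
      _ = D * (∑' n : ℕ, (n !⁻¹ : ℂ) • A ^ n) + ∑' n : ℕ, g n := by
          rw [Summable.tsum_add hsD hgsum, hs.tsum_mul_left D]
      _ = (D + C) * (∑' n : ℕ, (n !⁻¹ : ℂ) • A ^ n) := by
          rw [Summable.tsum_eq_zero_add hgsum, hg0, zero_add, hgshift, hs.tsum_mul_left C, add_mul]
  have hinv : exp A * exp (-A) = 1 := by
    rw [← exp_add_of_commute_of_mem_ball (𝕂 := ℂ) (Commute.refl A).neg_right
      ((expSeries_radius_eq_top ℂ B).symm ▸ edist_lt_top _ _)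
      ((expSeries_radius_eq_top ℂ B).symm ▸ edist_lt_top _ _), add_neg_cancel, exp_zero]
  rw [key, mul_assoc, hinv, mul_one]


/-- For the θ-twist `F_θ = exp((i/2) θ_{rs} w⁺_r ⊗ w⁺_s)` with `θ`
antisymmetric real, the twisted coproduct of `w⁰_{ir}` is
`Δ_F(w⁰_{ir}) = w⁰_{ir}⊗1 + 1⊗w⁰_{ir} - (1/2) θ_{is}(w⁺_s ⊗ w⁺_r - w⁺_r ⊗ w⁺_s)`,
while `Δ_F(w⁺_r) = w⁺_r⊗1 + 1⊗w⁺_r` remains undeformed.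

The (completed) tensor square of `W(Π,X)` is abstracted as a complete normed algebra
`B`, with `W01 i r = w⁰_{ir}⊗1`, `W02 i r = 1⊗w⁰_{ir}`, `Wp1 r = w⁺_r⊗1`,
`Wp2 r = 1⊗w⁺_r`; thus `Δ(w⁰_{ir}) = W01 i r + W02 i r`, `Δ(w⁺_r) = Wp1 r + Wp2 r`,
`w⁺_s ⊗ w⁺_r = Wp1 s * Wp2 r`, and the relations `[w⁰_{ir}, w⁺_s] = iδ_{si} w⁺_r`,
`[w⁺_r, w⁺_s] = 0` are imposed in each slot, different slots commuting. -/
theorem theta_twist_coproducts (n : ℕ) (B : Type*)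
    [NormedRing B] [NormedAlgebra ℂ B] [CompleteSpace B]
    (W01 W02 : Fin n → Fin n → B) (Wp1 Wp2 : Fin n → B)
    -- `[w⁺_r, w⁺_s] = 0` in both slots, and different slots commute
    (hpp1 : ∀ r s, Commute (Wp1 r) (Wp1 s))
    (hpp2 : ∀ r s, Commute (Wp2 r) (Wp2 s))
    (hpp12 : ∀ r s, Commute (Wp1 r) (Wp2 s))
    -- `[w⁰_{ir}, w⁺_s] = iδ_{si} w⁺_r` in each slot
    (h0p1 : ∀ i r s, W01 i r * Wp1 s - Wp1 s * W01 i r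
      = (if s = i then Complex.I else 0) • Wp1 r)
    (h0p2 : ∀ i r s, W02 i r * Wp2 s - Wp2 s * W02 i r
      = (if s = i then Complex.I else 0) • Wp2 r)
    (h0p12 : ∀ i r s, Commute (W01 i r) (Wp2 s))
    (h0p21 : ∀ i r s, Commute (W02 i r) (Wp1 s))
    -- `θ` is real and antisymmetric
    (θ : Fin n → Fin n → ℝ) (hθ : ∀ r s, θ r s = - θ s r) :
    -- `Δ_F(w⁰_{ir}) = Δ(w⁰_{ir}) - (1/2) θ_{is}(w⁺_s ⊗ w⁺_r - w⁺_r ⊗ w⁺_s)`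
    (∀ i r,
      exp ((Complex.I / 2) • ∑ u, ∑ v, (θ u v : ℂ) • (Wp1 u * Wp2 v))
          * (W01 i r + W02 i r)
          * exp (-((Complex.I / 2) • ∑ u, ∑ v, (θ u v : ℂ) • (Wp1 u * Wp2 v)))
        = W01 i r + W02 i r
          - (1 / 2 : ℂ) • ∑ s, (θ i s : ℂ) • (Wp1 s * Wp2 r - Wp1 r * Wp2 s)) ∧
    -- `Δ_F(w⁺_r) = Δ(w⁺_r)` remains undeformed
    (∀ r,
      exp ((Complex.I / 2) • ∑ u, ∑ v, (θ u v : ℂ) • (Wp1 u * Wp2 v))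
          * (Wp1 r + Wp2 r)
          * exp (-((Complex.I / 2) • ∑ u, ∑ v, (θ u v : ℂ) • (Wp1 u * Wp2 v)))
        = Wp1 r + Wp2 r) :=by
  set S : B := ∑ u, ∑ v, (θ u v : ℂ) • (Wp1 u * Wp2 v) with hS
  have hT1 : ∀ a b c, Commute (Wp1 a * Wp2 b) (Wp1 c) :=
    fun a b c => (hpp1 a c).mul_left ((hpp12 c b).symm)
  have hT2 : ∀ a b c, Commute (Wp1 a * Wp2 b) (Wp2 c) :=
    fun a b c => (hpp12 a c).mul_left (hpp2 b c)
  have hSW1 : ∀ c, Commute S (Wp1 c) := fun c =>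
    Commute.sum_left _ _ _ fun u _ =>
      Commute.sum_left _ _ _ fun v _ => (hT1 u v c).smul_left _
  have hSW2 : ∀ c, Commute S (Wp2 c) := fun c =>
    Commute.sum_left _ _ _ fun u _ =>
      Commute.sum_left _ _ _ fun v _ => (hT2 u v c).smul_left _
  have hST : ∀ c d, Commute S (Wp1 c * Wp2 d) := fun c d =>
    (hSW1 c).mul_right (hSW2 d)
  set A : B := (Complex.I / 2) • S with hA
  constructor
  · -- twisted coproduct of w⁰
    intro i r
    set D : B := W01 i r + W02 i r with hD
    set C : B := -((1 / 2 : ℂ) • ∑ s, (θ i s : ℂ) • (Wp1 s * Wp2 r - Wp1 r * Wp2 s)) with hC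
    have hc1 : ∀ u v, W01 i r * (Wp1 u * Wp2 v) - (Wp1 u * Wp2 v) * W01 i r
        = (if u = i then Complex.I else 0) • (Wp1 r * Wp2 v) := by
      intro u v
      have e1 : W01 i r * Wp1 u = (if u = i then Complex.I else 0) • Wp1 r + Wp1 u * W01 i r :=
        sub_eq_iff_eq_add.mp (h0p1 i r u)
      have e2 : W01 i r * Wp2 v = Wp2 v * W01 i r := (h0p12 i r v).eq
      have e3 : W01 i r * (Wp1 u * Wp2 v)
          = (if u = i then Complex.I else 0) • (Wp1 r * Wp2 v) + (Wp1 u * Wp2 v) * W01 i r := by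
        rw [← mul_assoc, e1, add_mul, smul_mul_assoc, mul_assoc, e2, ← mul_assoc]
      rw [e3]; abel
    have hc2 : ∀ u v, W02 i r * (Wp1 u * Wp2 v) - (Wp1 u * Wp2 v) * W02 i r
        = (if v = i then Complex.I else 0) • (Wp1 u * Wp2 r) := by
      intro u v
      have e1 : W02 i r * Wp2 v = (if v = i then Complex.I else 0) • Wp2 r + Wp2 v * W02 i r :=
        sub_eq_iff_eq_add.mp (h0p2 i r v)
      have e2 : W02 i r * Wp1 u = Wp1 u * W02 i r := (h0p21 i r u).eq
      have e3 : W02 i r * (Wp1 u * Wp2 v)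
          = (if v = i then Complex.I else 0) • (Wp1 u * Wp2 r) + (Wp1 u * Wp2 v) * W02 i r := by
        rw [← mul_assoc, e2, mul_assoc, e1, mul_add, mul_smul_comm, ← mul_assoc]
      rw [e3]; abel
    have hterm : ∀ u v, D * (Wp1 u * Wp2 v) - (Wp1 u * Wp2 v) * D
        = (if u = i then Complex.I else 0) • (Wp1 r * Wp2 v)
          + (if v = i then Complex.I else 0) • (Wp1 u * Wp2 r) := by
      intro u v
      rw [hD, add_mul, mul_add, ← hc1 u v, ← hc2 u v]; abel
    have hDS : D * S - S * D
        = ∑ u, ∑ v, (θ u v : ℂ) •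
            ((if u = i then Complex.I else 0) • (Wp1 r * Wp2 v)
              + (if v = i then Complex.I else 0) • (Wp1 u * Wp2 r)) := by
      rw [hS, Finset.mul_sum, Finset.sum_mul, ← Finset.sum_sub_distrib]
      refine Finset.sum_congr rfl fun u _ => ?_
      rw [Finset.mul_sum, Finset.sum_mul, ← Finset.sum_sub_distrib]
      refine Finset.sum_congr rfl fun v _ => ?_
      rw [mul_smul_comm, smul_mul_assoc, ← smul_sub, hterm u v]
    have t1 : ∑ u, ∑ v, (θ u v : ℂ) • ((if u = i then Complex.I else 0) • (Wp1 r * Wp2 v))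
        = ∑ v, (θ i v : ℂ) • (Complex.I • (Wp1 r * Wp2 v)) := by
      rw [Finset.sum_eq_single i]
      · simp
      · intro u _ hu; simp [hu]
      · intro h; exact absurd (Finset.mem_univ i) h
    have t2 : ∑ u, ∑ v, (θ u v : ℂ) • ((if v = i then Complex.I else 0) • (Wp1 u * Wp2 r))
        = ∑ u, (θ u i : ℂ) • (Complex.I • (Wp1 u * Wp2 r)) := by
      refine Finset.sum_congr rfl fun u _ => ?_
      rw [Finset.sum_eq_single i]
      · simp
      · intro v _ hv; simp [hv]
      · intro h; exact absurd (Finset.mem_univ i) h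
    have h1 : A * D - D * A = C := by
      have hAD' : A * D - D * A = (Complex.I / 2) • (S * D - D * S) := by
        rw [hA, smul_mul_assoc, mul_smul_comm, ← smul_sub]
      rw [hAD', show S * D - D * S = -(D * S - S * D) from (neg_sub _ _).symm, hDS]
      simp only [smul_add, Finset.sum_add_distrib]
      rw [t1, t2, hC, ← Finset.sum_add_distrib, ← Finset.sum_neg_distrib, Finset.smul_sum,
        Finset.smul_sum, ← Finset.sum_neg_distrib]
      refine Finset.sum_congr rfl fun s _ => ?_
      have hsi : ((θ s i : ℝ) : ℂ) = -((θ i s : ℝ) : ℂ) := by exact_mod_cast hθ s i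
      have hII : (Complex.I / 2) * Complex.I = -(1/2 : ℂ) := by
        rw [div_mul_eq_mul_div, Complex.I_mul_I]; norm_num
      rw [hsi]
      have hscal : ∀ (a : ℂ) (y : B), (Complex.I / 2) • (a • Complex.I • y)
          = (-(1/2 : ℂ) * a) • y := by
        intro a y
        rw [smul_smul, smul_smul]
        congr 1
        rw [show Complex.I / 2 * a * Complex.I = Complex.I * Complex.I * a / 2 by ring,
          Complex.I_mul_I]
        ring
      simp only [neg_mul, neg_smul, neg_neg, smul_add, smul_neg]
      rw [hscal, hscal]
      module
    have h2 : A * C = C * A := by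
      have : Commute A C := by
        refine Commute.smul_left ?_ _
        refine Commute.neg_right ?_
        refine Commute.smul_right ?_ _
        exact Commute.sum_right _ _ _ fun s _ =>
          (((hST s r).sub_right (hST r s)).smul_right _)
      exact this.eq
    have := conj_exp_aux A D C h1 h2
    rw [this, hC, hD]
    abel
  · -- coproduct of w⁺ undeformed
    intro r
    have hc : Commute A (Wp1 r + Wp2 r) :=
      ((hSW1 r).smul_left _).add_right ((hSW2 r).smul_left _)
    have := conj_exp_aux A (Wp1 r + Wp2 r) 0 (sub_eq_zero.mpr hc.eq) (by simp)
    simpa using this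
end

section
/- For the twist F_h = exp(i h w⁰_{11} ⊗ w⁺_2) (where [w⁰_{11}, w⁺_2] = 0 in W(Π,X) with n ≥ 2), the twist cocycle condition holds, and the resulting star commutator on coordinates is x_i *_{F_h} x_j - x_j *_{F_h} x_i = i h (δ_{i1}δ_{j2} - δ_{j1}δ_{i2}) x_1; in particular x_1 *_{F_h} x_2 - x_2 *_{F_h} x_1 = i h x_1. -/
open TensorProduct MvPolynomial NormedSpace

/-- For the twist `F_h = exp(i h w⁰_{11} ⊗ w⁺_2)` (where
`[w⁰_{11}, w⁺_2] = 0` in `W(Π,X)` with `n ≥ 2`), the twist cocycle condition holds, and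
the resulting star commutator on coordinates is
`x_i *_{F_h} x_j - x_j *_{F_h} x_i = i h (δ_{i1}δ_{j2} - δ_{j1}δ_{i2}) x_1`; in
particular `x_1 *_{F_h} x_2 - x_2 *_{F_h} x_1 = i h x_1`.

For the cocycle condition, the (completed) tensor powers of `W(Π,X)` are abstracted as
complete normed algebras `B2` (for `W⊗W`) and `B3` (for `W⊗W⊗W`) with `H = W`, with
`u = w⁰_{11} ⊗ w⁺_2 ∈ B2` (a tensor product of two commuting primitive elements, since
`[w⁰_{11}, w⁺_2] = iδ_{21}w⁺_1 = 0`), `u13 = w⁰_{11} ⊗ 1 ⊗ w⁺_2 ∈ B3`, slot-placement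
homomorphisms `e12, e23 : B2 → B3`, `D1 = Δ⊗id`, `D2 = id⊗Δ`, `E1 = ε⊗id`,
`E2 = id⊗ε`.  For the star product, `F_h⁻¹` acts on `U(X) ⊗ U(X)` as the locally finite
exponential `E` of `T = -i h (w⁰_{11} ▷) ⊗ (w⁺_2 ▷)` where `w⁰_{11} ▷ = x_1·(-i∂_1)`
and `w⁺_2 ▷ = -i∂_2`. -/
theorem h_twist_cocycle_and_star_commutator
    (n : ℕ) (hn : 2 ≤ n) (h : ℝ)
    -- abstract completed tensor powers for the cocycle condition
    (W B2 B3 : Type*)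
    [NormedRing W] [NormedAlgebra ℂ W] [CompleteSpace W]
    [NormedRing B2] [NormedAlgebra ℂ B2] [CompleteSpace B2]
    [NormedRing B3] [NormedAlgebra ℂ B3] [CompleteSpace B3]
    (e12 e23 D1 D2 : B2 →ₐ[ℂ] B3) (E1 E2 : B2 →ₐ[ℂ] W)
    (he12 : Continuous e12) (he23 : Continuous e23)
    (hD1 : Continuous D1) (hD2 : Continuous D2)
    (hE1 : Continuous E1) (hE2 : Continuous E2)
    -- `u = w⁰_{11} ⊗ w⁺_2`, a tensor of commuting primitive elements, `u13` its
    -- placement in slots (1,3)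
    (u : B2) (u13 : B3)
    (hD1u : D1 u = u13 + e23 u)
    (hD2u : D2 u = e12 u + u13)
    (hcomm₁ : Commute (e12 u) u13)
    (hcomm₂ : Commute (e12 u) (e23 u))
    (hcomm₃ : Commute u13 (e23 u))
    (hE1u : E1 u = 0) (hE2u : E2 u = 0)
    -- the concrete action on `U(X) = ℂ[x_1,…,x_n]`:
    -- `w⁰_{11} ▷ = x_1·(-i ∂_1)` and `w⁺_2 ▷ = -i ∂_2`
    (W11 P2 : MvPolynomial (Fin n) ℂ →ₗ[ℂ] MvPolynomial (Fin n) ℂ)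
    (hW11 : W11 = (LinearMap.mulLeft ℂ (X (⟨0, by omega⟩ : Fin n))) ∘ₗ
      ((-Complex.I) • (pderiv (⟨0, by omega⟩ : Fin n)).toLinearMap))
    (hP2 : P2 = (-Complex.I) • (pderiv (⟨1, by omega⟩ : Fin n)).toLinearMap)
    -- `T` is the exponent of `F_h⁻¹` on `U(X) ⊗ U(X)`, `E` its locally finite
    -- exponential
    (T E : MvPolynomial (Fin n) ℂ ⊗[ℂ] MvPolynomial (Fin n) ℂ →ₗ[ℂ]
      MvPolynomial (Fin n) ℂ ⊗[ℂ] MvPolynomial (Fin n) ℂ)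
    (hT : T = (-(Complex.I) * (h : ℂ)) • TensorProduct.map W11 P2)
    (hE : ∀ (v : MvPolynomial (Fin n) ℂ ⊗[ℂ] MvPolynomial (Fin n) ℂ) (N : ℕ),
      (T ^ N) v = 0 → E v = ∑ k ∈ Finset.range N, ((k.factorial : ℂ))⁻¹ • (T ^ k) v)
    -- the star product `x *_{F_h} y = μ(F_h⁻¹ ▷ (x ⊗ y))`
    (star : MvPolynomial (Fin n) ℂ → MvPolynomial (Fin n) ℂ → MvPolynomial (Fin n) ℂ)
    (hstar : ∀ x y, star x y = LinearMap.mul' ℂ (MvPolynomial (Fin n) ℂ) (E (x ⊗ₜ[ℂ] y))) :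
    -- the twist cocycle condition for `F_h = exp(i h u)`
    (e12 (NormedSpace.exp ((Complex.I * (h : ℂ)) • u)) * D1 (NormedSpace.exp ((Complex.I * (h : ℂ)) • u))
      = e23 (NormedSpace.exp ((Complex.I * (h : ℂ)) • u)) * D2 (NormedSpace.exp ((Complex.I * (h : ℂ)) • u))) ∧
    (E1 (NormedSpace.exp ((Complex.I * (h : ℂ)) • u)) = 1) ∧
    (E2 (NormedSpace.exp ((Complex.I * (h : ℂ)) • u)) = 1) ∧
    -- `x_i *_{F_h} x_j - x_j *_{F_h} x_i = i h (δ_{i1}δ_{j2} - δ_{j1}δ_{i2}) x_1`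
    (∀ i j : Fin n,
      star (X i) (X j) - star (X j) (X i)
        = (Complex.I * (h : ℂ) *
            ((if i = (⟨0, by omega⟩ : Fin n) then 1 else 0)
                * (if j = (⟨1, by omega⟩ : Fin n) then 1 else 0)
              - (if j = (⟨0, by omega⟩ : Fin n) then 1 else 0)
                * (if i = (⟨1, by omega⟩ : Fin n) then 1 else 0)))
            • X (⟨0, by omega⟩ : Fin n)) ∧
    -- in particular `x_1 *_{F_h} x_2 - x_2 *_{F_h} x_1 = i h x_1`
    (star (X (⟨0, by omega⟩ : Fin n)) (X (⟨1, by omega⟩ : Fin n))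
        - star (X (⟨1, by omega⟩ : Fin n)) (X (⟨0, by omega⟩ : Fin n))
      = (Complex.I * (h : ℂ)) • X (⟨0, by omega⟩ : Fin n)) := by
  classical
  set c : ℂ := Complex.I * (h : ℂ) with hc
  set i0 : Fin n := ⟨0, by omega⟩ with hi0
  set i1 : Fin n := ⟨1, by omega⟩ with hi1
  have hne : i0 ≠ i1 := by simp [hi0, hi1, Fin.ext_iff]
  -- commutation facts after scaling
  have ha : Commute (c • e12 u) (c • u13) := (hcomm₁.smul_left c).smul_right c
  have hb : Commute (c • e12 u) (c • e23 u) := (hcomm₂.smul_left c).smul_right c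
  have hcc : Commute (c • u13) (c • e23 u) := (hcomm₃.smul_left c).smul_right c
  -- star product computation
  have hW : ∀ j : Fin n, W11 (X j) =
      ((-Complex.I) * (if j = i0 then 1 else 0)) • X i0 := by
    intro j
    rw [hW11]
    rcases eq_or_ne j i0 with hji | hji <;>
      simp [hji, Pi.single_apply, mul_smul_comm]
  have hP : ∀ j : Fin n, P2 (X j) =
      ((-Complex.I) * (if j = i1 then 1 else 0)) • 1 := by
    intro j
    rw [hP2]
    rcases eq_or_ne j i1 with hji | hji <;>
      simp [hji, Pi.single_apply]
  have hTX : ∀ i j : Fin n, T (X i ⊗ₜ[ℂ] X j) =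
      (c * (if i = i0 then 1 else 0) * (if j = i1 then 1 else 0)) •
        ((X i0 : MvPolynomial (Fin n) ℂ) ⊗ₜ[ℂ] (1 : MvPolynomial (Fin n) ℂ)) := by
    intro i j
    rw [hT]
    simp only [LinearMap.smul_apply, TensorProduct.map_tmul, hW, hP]
    rw [TensorProduct.smul_tmul', TensorProduct.tmul_smul, TensorProduct.smul_tmul']
    rw [smul_smul, smul_smul]
    congr 1
    match_scalars
    · linear_combination (-(Complex.I) * (h : ℂ) * (if i = i0 then (1:ℂ) else 0) *
        (if j = i1 then (1:ℂ) else 0)) * Complex.I_sq -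
        ((if i = i0 then (1:ℂ) else 0) * (if j = i1 then (1:ℂ) else 0)) * hc
  have hT0 : T ((X i0 : MvPolynomial (Fin n) ℂ) ⊗ₜ[ℂ] (1 : MvPolynomial (Fin n) ℂ)) = 0 := by
    rw [hT]
    simp only [LinearMap.smul_apply, TensorProduct.map_tmul]
    have : P2 (1 : MvPolynomial (Fin n) ℂ) = 0 := by
      rw [hP2]; simp
    rw [this, TensorProduct.tmul_zero, smul_zero]
  have hTsq : ∀ i j : Fin n, (T ^ 2) (X i ⊗ₜ[ℂ] X j) = 0 := by
    intro i j
    rw [pow_two, Module.End.mul_apply, hTX, map_smul, hT0, smul_zero]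
  have hstarX : ∀ i j : Fin n, star (X i) (X j) =
      X i * X j + (c * (if i = i0 then 1 else 0) * (if j = i1 then 1 else 0)) • X i0 := by
    intro i j
    rw [hstar, hE _ 2 (hTsq i j)]
    rw [Finset.sum_range_succ, Finset.sum_range_one]
    simp only [pow_zero, pow_one, Module.End.one_apply, Nat.factorial_zero, Nat.factorial_one,
      Nat.cast_one, inv_one, one_smul]
    rw [hTX, map_add, map_smul, LinearMap.mul'_apply, LinearMap.mul'_apply, mul_one]
  letI : NormedAlgebra ℚ W := NormedAlgebra.restrictScalars ℚ ℂ W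
  letI : NormedAlgebra ℚ B2 := NormedAlgebra.restrictScalars ℚ ℂ B2
  letI : NormedAlgebra ℚ B3 := NormedAlgebra.restrictScalars ℚ ℂ B3
  refine ⟨?_, ?_, ?_, ?_, ?_⟩
  · rw [map_exp e12 he12, map_exp D1 hD1, map_exp e23 he23, map_exp D2 hD2,
      map_smul, map_smul, map_smul, map_smul, hD1u, hD2u, smul_add, smul_add,
      exp_add_of_commute hcc, exp_add_of_commute ha, ← mul_assoc, ← mul_assoc,
      ← exp_add_of_commute ha, ← exp_add_of_commute (hb.add_left hcc),
      mul_assoc, ← exp_add_of_commute ha,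
      ← exp_add_of_commute (hb.symm.add_right hcc.symm)]
    congr 1
    abel
  · rw [map_exp E1 hE1, map_smul, hE1u, smul_zero, exp_zero]
  · rw [map_exp E2 hE2, map_smul, hE2u, smul_zero, exp_zero]
  · intro i j
    rw [hstarX i j, hstarX j i, mul_comm (X j) (X i), add_sub_add_left_eq_sub, ← sub_smul]
    congr 1
    ring
  · have := hstarX i0 i1
    rw [hstarX i0 i1, hstarX i1 i0, mul_comm (X i1) (X i0), add_sub_add_left_eq_sub, ← sub_smul]
    congr 1
    simp [hne, hne.symm]
end
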